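/- For every real β > 0 and all integers k, j ≥ 0: ((2k+2β)(2j+2β) / ((k+2β)(j+2β))) · ∫_0^1 (d/dr)[J_k^{−1,2β}(2r−1)] · (d/dr)[J_j^{−1,2β}(2r−1)] · r^{2β+1} dr = δ_{k,j} · (2k+2β) · (1 − δ_{k,0}), where δ denotes the Kronecker delta. -/

import Mathlib

open Real MeasureTheory

/-- Generalized binomial coefficient `C(x,k) = x(x-1)⋯(x-k+1)/k!`. -/
noncomputable def genBinom (x : ℝ) (k : ℕ) : ℝ :=
  (descPochhammer ℝ k).eval x / (Nat.factorial k : ℝ)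

/-- Generalized Jacobi polynomial `J_n^{α,β}(ζ)`. -/
noncomputable def genJacobi (α β : ℝ) (n : ℕ) (ζ : ℝ) : ℝ :=
  ∑ m ∈ Finset.range (n + 1),
    genBinom ((n : ℝ) + α) (n - m) * genBinom ((n : ℝ) + β) m *
      ((ζ - 1) / 2) ^ m * ((ζ + 1) / 2) ^ (n - m)

/-!
Differentiating the defining sum termwise gives
`d/dζ J_{n+1}^{α,β} = (n+α+β+2)/2 · J_n^{α+1,β+1}`, while `J_0` is constant; so for `k, j ≥ 1`
the integrand is `(k+2β)(j+2β) P_{k-1}(r) P_{j-1}(r) r^b`, where `b = 2β+1` and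
`P_n(r) = J_n^{0,b}(2r-1)`. These are orthogonal for the weight `r^b` on `[0,1]`, with
`∫ P_n² r^b = 1/(2n+b+1)`. Indeed, expanding `P_n` in powers of `r - 1` and `r`, Euler's Beta
integral and Chu–Vandermonde for rising factorials give the moments
`∫ P_n(r) r^t r^b dr = t(t-1)⋯(t-n+1) / ((t+b+1)(t+b+2)⋯(t+b+n+1))`, which vanish for `t < n`;
and the leading coefficient of `P_n` is `C(2n+b, n)`, again by Vandermonde.
-/

open Polynomial Finset
open scoped Nat Interval

theorem descPochhammer_smeval_eq_eval {R : Type*} [CommRing R] (x : R) (n : ℕ) :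
    (descPochhammer ℤ n).smeval x = (descPochhammer R n).eval x := by
  rw [← descPochhammer_map (algebraMap ℤ R), eval_map, ← aeval_def, aeval_eq_smeval]

theorem ascPochhammer_eval_eq_prod_range {R : Type*} [CommSemiring R] (n : ℕ) (r : R) :
    (ascPochhammer R n).eval r = ∏ j ∈ range n, (r + j) := by
  induction n with
  | zero => simp
  | succ n ih => simp [ascPochhammer_succ_right, ih, prod_range_succ]

theorem descPochhammer_eval_add {R : Type*} [CommRing R] (x y : R) (n : ℕ) :
    (descPochhammer R n).eval (x + y) =
      ∑ m ∈ range (n + 1), n.choose m * (descPochhammer R m).eval x *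
        (descPochhammer R (n - m)).eval y := by
  simp only [← descPochhammer_smeval_eq_eval, Ring.descPochhammer_smeval_add n (Commute.all x y),
    Nat.sum_antidiagonal_eq_sum_range_succ (fun i j => (n.choose i : R) *
      ((descPochhammer ℤ i).smeval x * (descPochhammer ℤ j).smeval y)), mul_assoc]

theorem ascPochhammer_eval_add {R : Type*} [CommRing R] (x y : R) (n : ℕ) :
    (ascPochhammer R n).eval (x + y) =
      ∑ m ∈ range (n + 1), n.choose m * (ascPochhammer R m).eval x *
        (ascPochhammer R (n - m)).eval y := by
  rw [← neg_neg (x + y), ascPochhammer_eval_neg_eq_descPochhammer, neg_add,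
    descPochhammer_eval_add, mul_sum]
  refine sum_congr rfl fun m hm => ?_
  have hmn : m ≤ n := Nat.lt_succ_iff.mp (mem_range.mp hm)
  rw [← neg_neg x, ← neg_neg y, ascPochhammer_eval_neg_eq_descPochhammer,
    ascPochhammer_eval_neg_eq_descPochhammer, neg_neg, neg_neg, ← Nat.add_sub_cancel' hmn,
    pow_add, Nat.add_sub_cancel_left]
  ring

theorem ascPochhammer_eval_add_mul {R : Type*} [CommSemiring R] (y : R) (k l : ℕ) :
    (ascPochhammer R (k + l)).eval y =
      (ascPochhammer R k).eval y * (ascPochhammer R l).eval (y + k) := by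
  rw [← ascPochhammer_mul, eval_mul, eval_comp]
  simp

theorem sum_descPochhammer_div_ascPochhammer (n : ℕ) (c : ℝ) {y : ℝ} (hy : 0 < y) :
    ∑ m ∈ range (n + 1), (-1) ^ m * n.choose m * (descPochhammer ℝ m).eval c /
        (ascPochhammer ℝ (m + 1)).eval (y + (n - m : ℕ)) =
      (ascPochhammer ℝ n).eval (y - c) / (ascPochhammer ℝ (n + 1)).eval y := by
  rw [eq_div_iff (ascPochhammer_pos _ _ hy).ne', sum_mul, sub_eq_neg_add, ascPochhammer_eval_add]
  refine sum_congr rfl fun m hm => ?_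
  have hmn : m ≤ n := Nat.lt_succ_iff.mp (mem_range.mp hm)
  rw [show n + 1 = (n - m) + (m + 1) by omega, ascPochhammer_eval_add_mul y (n - m) (m + 1),
    ascPochhammer_eval_neg_eq_descPochhammer]
  have hpos : 0 < (ascPochhammer ℝ (m + 1)).eval (y + (n - m : ℕ)) :=
    ascPochhammer_pos _ _ (by positivity)
  field_simp

theorem genBinom_eq_choose (x : ℝ) (k : ℕ) : genBinom x k = Ring.choose x k := by
  rw [genBinom, Ring.choose_eq_smul, descPochhammer_smeval_eq_eval, smul_eq_mul, div_eq_inv_mul]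

theorem genBinom_natCast (n k : ℕ) : genBinom n k = n.choose k :=
  (Nat.cast_choose_eq_descPochhammer_div ℝ n k).symm

theorem genBinom_add (x y : ℝ) (n : ℕ) :
    genBinom (x + y) n = ∑ m ∈ range (n + 1), genBinom x m * genBinom y (n - m) := by
  simp only [genBinom_eq_choose, Ring.add_choose_eq n (Commute.all x y),
    Nat.sum_antidiagonal_eq_sum_range_succ (fun i j => Ring.choose x i * Ring.choose y j)]

theorem succ_mul_genBinom_succ (x : ℝ) (k : ℕ) :
    (k + 1) * genBinom x (k + 1) = (x - k) * genBinom x k := by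
  rw [genBinom, genBinom, descPochhammer_succ_eval, Nat.factorial_succ, Nat.cast_mul]
  field_simp
  push_cast
  ring

theorem hasDerivAt_sum_pow_mul_pow (c : ℕ → ℝ) (N : ℕ) (ζ : ℝ) :
    HasDerivAt
      (fun z => ∑ m ∈ range (N + 2), c m * ((z - 1) / 2) ^ m * ((z + 1) / 2) ^ (N + 1 - m))
      ((∑ i ∈ range (N + 1), ((i + 1) * c (i + 1) + (N + 1 - i) * c i) *
        ((ζ - 1) / 2) ^ i * ((ζ + 1) / 2) ^ (N - i)) / 2) ζ := by
  have hu : HasDerivAt (fun z : ℝ => (z - 1) / 2) (1 / 2) ζ :=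
    ((hasDerivAt_id ζ).sub_const 1).div_const 2
  have hv : HasDerivAt (fun z : ℝ => (z + 1) / 2) (1 / 2) ζ :=
    ((hasDerivAt_id ζ).add_const 1).div_const 2
  refine (HasDerivAt.fun_sum fun m (_ : m ∈ range (N + 2)) =>
    ((hu.fun_pow m).const_mul (c m)).mul (hv.fun_pow (N + 1 - m))).congr_deriv ?_
  set u := (ζ - 1) / 2
  set v := (ζ + 1) / 2
  have lower : ∑ m ∈ range (N + 2), c m * (m * u ^ (m - 1) * (1 / 2)) * v ^ (N + 1 - m) =
      ∑ i ∈ range (N + 1), (i + 1) * c (i + 1) * u ^ i * v ^ (N - i) / 2 := by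
    rw [sum_range_succ']
    simp only [Nat.cast_zero, zero_mul, mul_zero, add_zero, Nat.cast_succ, Nat.add_sub_cancel]
    refine sum_congr rfl fun i _ => ?_
    rw [Nat.add_sub_add_right]
    ring
  have upper :
      ∑ m ∈ range (N + 2), c m * u ^ m * ((N + 1 - m : ℕ) * v ^ (N + 1 - m - 1) * (1 / 2)) =
      ∑ i ∈ range (N + 1), (N + 1 - i) * c i * u ^ i * v ^ (N - i) / 2 := by
    rw [sum_range_succ, Nat.sub_self, Nat.cast_zero, zero_mul, zero_mul, mul_zero, add_zero]
    refine sum_congr rfl fun i hi => ?_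
    have hiN : i ≤ N := Nat.lt_succ_iff.mp (mem_range.mp hi)
    rw [Nat.cast_sub (by omega), Nat.sub_right_comm, Nat.add_sub_cancel]
    push_cast
    ring
  rw [sum_add_distrib, lower, upper, sum_div, ← sum_add_distrib]
  refine sum_congr rfl fun i _ => ?_
  ring

theorem hasDerivAt_genJacobi (α β : ℝ) (n : ℕ) (ζ : ℝ) :
    HasDerivAt (genJacobi α β (n + 1))
      ((n + α + β + 2) / 2 * genJacobi (α + 1) (β + 1) n ζ) ζ := by
  refine (hasDerivAt_sum_pow_mul_pow
    (fun m => genBinom ((n + 1 : ℕ) + α) (n + 1 - m) * genBinom ((n + 1 : ℕ) + β) m) n ζ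
    ).congr_deriv ?_
  rw [genJacobi, mul_sum, sum_div]
  refine sum_congr rfl fun i hi => ?_
  have hin : i ≤ n := Nat.lt_succ_iff.mp (mem_range.mp hi)
  have hα := succ_mul_genBinom_succ ((n + 1 : ℕ) + α) (n - i)
  have hβ := succ_mul_genBinom_succ ((n + 1 : ℕ) + β) i
  rw [Nat.add_sub_add_right, show n + 1 - i = n - i + 1 by omega]
  rw [Nat.cast_sub hin] at hα
  push_cast at hα hβ ⊢
  rw [show (n : ℝ) + (α + 1) = n + 1 + α by ring,
    show (n : ℝ) + (β + 1) = n + 1 + β by ring]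
  linear_combination (((ζ - 1) / 2) ^ i * ((ζ + 1) / 2) ^ (n - i) / 2) *
    (genBinom (n + 1 + α) (n - i) * hβ + genBinom (n + 1 + β) i * hα)

theorem genJacobi_zero (α β ζ : ℝ) : genJacobi α β 0 ζ = 1 := by
  simp [genJacobi, genBinom]

theorem continuous_genJacobi (α β : ℝ) (n : ℕ) : Continuous (genJacobi α β n) := by
  unfold genJacobi
  fun_prop

theorem deriv_genJacobi_comp (α β : ℝ) (n : ℕ) (r : ℝ) :
    deriv (fun s => genJacobi α β (n + 1) (2 * s - 1)) r =
      (n + α + β + 2) * genJacobi (α + 1) (β + 1) n (2 * r - 1) := by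
  have hlin : HasDerivAt (fun s : ℝ => 2 * s - 1) 2 r := by
    simpa using ((hasDerivAt_id r).const_mul 2).sub_const 1
  refine ((hasDerivAt_genJacobi α β n (2 * r - 1)).comp r hlin).deriv.trans ?_
  ring

theorem intervalIntegrable_mul_rpow {g : ℝ → ℝ} (hg : Continuous g) {e : ℝ} (he : -1 < e)
    (a b : ℝ) : IntervalIntegrable (fun r => g r * r ^ e) volume a b :=
  (intervalIntegral.intervalIntegrable_rpow' he).continuousOn_mul hg.continuousOn

theorem integral_one_sub_pow_mul_rpow (m : ℕ) {e : ℝ} (he : -1 < e) :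
    ∫ r in (0 : ℝ)..1, (1 - r) ^ m * r ^ e =
      m ! / (ascPochhammer ℝ (m + 1)).eval (e + 1) := by
  have hre : 0 < ((e + 1 : ℝ) : ℂ).re := by rw [Complex.ofReal_re]; linarith
  have key := Complex.betaIntegral_eval_nat_add_one_right hre m
  apply Complex.ofReal_injective
  rw [← intervalIntegral.integral_ofReal, ascPochhammer_eval_eq_prod_range]
  push_cast at key ⊢
  rw [← key, Complex.betaIntegral]
  refine intervalIntegral.integral_congr fun r hr => ?_
  rw [Set.uIcc_of_le zero_le_one] at hr
  rw [Complex.ofReal_cpow hr.1, add_sub_cancel_right, add_sub_cancel_right, Complex.cpow_natCast]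
  ring

noncomputable def shiftedJacobi (α β : ℝ) (n : ℕ) : ℝ[X] :=
  ∑ m ∈ range (n + 1),
    C (genBinom (n + α) (n - m) * genBinom (n + β) m) * (X - 1) ^ m * X ^ (n - m)

theorem eval_shiftedJacobi (α β : ℝ) (n : ℕ) (r : ℝ) :
    (shiftedJacobi α β n).eval r = genJacobi α β n (2 * r - 1) := by
  rw [shiftedJacobi, eval_finsetSum, genJacobi]
  refine sum_congr rfl fun m _ => ?_
  rw [show (2 * r - 1 - 1) / 2 = r - 1 by ring, show (2 * r - 1 + 1) / 2 = r by ring]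
  simp

theorem natDegree_shiftedJacobi_le (α β : ℝ) (n : ℕ) :
    (shiftedJacobi α β n).natDegree ≤ n := by
  refine natDegree_sum_le_of_forall_le _ _ fun m hm => ?_
  have hmn : m ≤ n := Nat.lt_succ_iff.mp (mem_range.mp hm)
  compute_degree
  omega

theorem coeff_shiftedJacobi_self (α β : ℝ) (n : ℕ) :
    (shiftedJacobi α β n).coeff n = genBinom (2 * n + α + β) n := by
  have hX : (X - 1 : ℝ[X]).Monic := by simpa using monic_X_sub_C (1 : ℝ)
  have hdeg : (X - 1 : ℝ[X]).natDegree = 1 := by simpa using natDegree_X_sub_C (1 : ℝ)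
  rw [show 2 * (n : ℝ) + α + β = (n + β) + (n + α) by ring, genBinom_add, shiftedJacobi,
    finsetSum_coeff]
  refine sum_congr rfl fun m hm => ?_
  have hmn : m ≤ n := Nat.lt_succ_iff.mp (mem_range.mp hm)
  have hmon := (hX.pow m).mul (monic_X_pow (n - m))
  have hnat : ((X - 1 : ℝ[X]) ^ m * X ^ (n - m)).natDegree = n := by
    rw [(hX.pow m).natDegree_mul (monic_X_pow _), hX.natDegree_pow, hdeg, natDegree_X_pow,
      mul_one, Nat.add_sub_cancel' hmn]
  have hlead : ((X - 1 : ℝ[X]) ^ m * X ^ (n - m)).coeff n = 1 := by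
    rw [← hmon.coeff_natDegree, hnat]
  rw [mul_assoc, coeff_C_mul, hlead, mul_one, mul_comm]

theorem integral_genJacobi_mul_pow_mul_rpow {b : ℝ} (hb : -1 < b) (n t : ℕ) :
    ∫ r in (0 : ℝ)..1, genJacobi 0 b n (2 * r - 1) * r ^ t * r ^ b =
      (descPochhammer ℝ n).eval (t : ℝ) / (ascPochhammer ℝ (n + 1)).eval (t + b + 1) := by
  have he : ∀ m, -1 < ((n - m + t : ℕ) : ℝ) + b := fun m => by
    have := (n - m + t).cast_nonneg (α := ℝ); linarith
  have expand : ∀ᵐ r, r ∈ Ι (0 : ℝ) 1 → genJacobi 0 b n (2 * r - 1) * r ^ t * r ^ b =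
      ∑ m ∈ range (n + 1), (-1) ^ m * n.choose m * genBinom (n + b) m *
        ((1 - r) ^ m * r ^ (((n - m + t : ℕ) : ℝ) + b)) := by
    refine ae_of_all _ fun r hr => ?_
    rw [Set.uIoc_of_le zero_le_one] at hr
    rw [genJacobi, sum_mul, sum_mul]
    refine sum_congr rfl fun m hm => ?_
    have hmn : m ≤ n := Nat.lt_succ_iff.mp (mem_range.mp hm)
    rw [add_zero, genBinom_natCast, Nat.choose_symm hmn, rpow_add hr.1, rpow_natCast,
      show (2 * r - 1 - 1) / 2 = -(1 - r) by ring, show (2 * r - 1 + 1) / 2 = r by ring,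
      neg_pow, pow_add]
    ring
  have hterm : ∀ m ∈ range (n + 1),
      ∫ r in (0 : ℝ)..1, (-1) ^ m * n.choose m * genBinom (n + b) m *
        ((1 - r) ^ m * r ^ (((n - m + t : ℕ) : ℝ) + b)) =
      (-1) ^ m * n.choose m * (descPochhammer ℝ m).eval (n + b) /
        (ascPochhammer ℝ (m + 1)).eval (t + b + 1 + (n - m : ℕ)) := by
    intro m _
    rw [intervalIntegral.integral_const_mul, integral_one_sub_pow_mul_rpow m (he m), genBinom,
      show ((n - m + t : ℕ) : ℝ) + b + 1 = t + b + 1 + (n - m : ℕ) by push_cast; ring]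
    field_simp
  have hy : (0 : ℝ) < t + b + 1 := by have := t.cast_nonneg (α := ℝ); linarith
  rw [intervalIntegral.integral_congr_ae expand, intervalIntegral.integral_finsetSum fun m _ =>
      (intervalIntegrable_mul_rpow (by fun_prop) (he m) 0 1).const_mul _,
    sum_congr rfl hterm, sum_descPochhammer_div_ascPochhammer n _ hy,
    descPochhammer_eval_eq_ascPochhammer, show (t : ℝ) + b + 1 - (n + b) = t - n + 1 by ring]

theorem integral_genJacobi_mul_eval_mul_rpow {b : ℝ} (hb : -1 < b) {n : ℕ} {q : ℝ[X]}
    (hq : q.natDegree ≤ n) :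
    ∫ r in (0 : ℝ)..1, genJacobi 0 b n (2 * r - 1) * q.eval r * r ^ b =
      q.coeff n * n ! / (ascPochhammer ℝ (n + 1)).eval (n + b + 1) := by
  have expand : ∀ r ∈ Set.uIcc (0 : ℝ) 1, genJacobi 0 b n (2 * r - 1) * q.eval r * r ^ b =
      ∑ t ∈ range (n + 1), q.coeff t * (genJacobi 0 b n (2 * r - 1) * r ^ t * r ^ b) := by
    intro r _
    rw [eval_eq_sum_range' (Nat.lt_succ_of_le hq), mul_sum, sum_mul]
    exact sum_congr rfl fun t _ => by ring
  have hJ : Continuous fun r : ℝ => genJacobi 0 b n (2 * r - 1) :=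
    (continuous_genJacobi 0 b n).comp (by fun_prop)
  rw [intervalIntegral.integral_congr expand, intervalIntegral.integral_finsetSum fun t _ =>
    (intervalIntegrable_mul_rpow (g := fun r => genJacobi 0 b n (2 * r - 1) * r ^ t)
      (hJ.mul (continuous_pow t)) hb 0 1).const_mul _]
  simp_rw [intervalIntegral.integral_const_mul, integral_genJacobi_mul_pow_mul_rpow hb]
  rw [sum_eq_single_of_mem n (self_mem_range_succ n) fun t ht htn => ?_]
  · rw [descPochhammer_eval_eq_descFactorial, Nat.descFactorial_self, mul_div_assoc]
  · have htn : t < n := lt_of_le_of_ne (Nat.lt_succ_iff.mp (mem_range.mp ht)) htn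
    rw [descPochhammer_eval_coe_nat_of_lt htn, zero_div, mul_zero]

theorem integral_genJacobi_mul_genJacobi_mul_rpow {b : ℝ} (hb : -1 < b) (n n' : ℕ) :
    ∫ r in (0 : ℝ)..1, genJacobi 0 b n (2 * r - 1) * genJacobi 0 b n' (2 * r - 1) * r ^ b =
      if n = n' then 1 / (2 * n + b + 1) else 0 := by
  wlog h : n' ≤ n generalizing n n'
  · have hne : n ≠ n' := by omega
    have hsymm := this n' n (by omega)
    rw [if_neg hne.symm] at hsymm
    rw [if_neg hne]
    exact (intervalIntegral.integral_congr fun r _ => by ring).trans hsymm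
  simp_rw [← eval_shiftedJacobi 0 b n']
  rw [integral_genJacobi_mul_eval_mul_rpow hb ((natDegree_shiftedJacobi_le 0 b n').trans h)]
  rcases h.lt_or_eq with hlt | rfl
  · rw [coeff_eq_zero_of_natDegree_lt ((natDegree_shiftedJacobi_le 0 b n').trans_lt hlt),
      zero_mul, zero_div, if_neg hlt.ne']
  · rw [if_pos rfl, coeff_shiftedJacobi_self, genBinom, descPochhammer_eval_eq_ascPochhammer,
      ascPochhammer_succ_eval, show 2 * (n' : ℝ) + 0 + b - n' + 1 = n' + b + 1 by ring]
    have hpos : 0 < (ascPochhammer ℝ n').eval (n' + b + 1 : ℝ) :=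
      ascPochhammer_pos _ _ (by have := n'.cast_nonneg (α := ℝ); linarith)
    have hfac : (n' ! : ℝ) ≠ 0 := by positivity
    field_simp
    ring

/-- Stiffness-matrix orthogonality of the radial basis `J_k^{-1,2β}(2r-1)`. -/
theorem radial_stiffness_I (β : ℝ) (hβ : 0 < β) (k j : ℕ) :
    ((2 * (k : ℝ) + 2 * β) * (2 * (j : ℝ) + 2 * β) /
        (((k : ℝ) + 2 * β) * ((j : ℝ) + 2 * β))) *
      ∫ r in (0:ℝ)..1,
        deriv (fun s => genJacobi (-1) (2 * β) k (2 * s - 1)) r *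
          deriv (fun s => genJacobi (-1) (2 * β) j (2 * s - 1)) r * r ^ (2 * β + 1)
    = (if k = j then 1 else 0) * (2 * (k : ℝ) + 2 * β) * (1 - if k = 0 then 1 else 0) := by
  obtain _ | k := k
  · simp [genJacobi_zero]
  obtain _ | j := j
  · simp [genJacobi_zero]
  have hint :
      ∫ r in (0 : ℝ)..1, deriv (fun s => genJacobi (-1) (2 * β) (k + 1) (2 * s - 1)) r *
        deriv (fun s => genJacobi (-1) (2 * β) (j + 1) (2 * s - 1)) r * r ^ (2 * β + 1) =
      (k + 1 + 2 * β) * (j + 1 + 2 * β) *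
        if k = j then 1 / (2 * k + (2 * β + 1) + 1) else 0 := by
    rw [← integral_genJacobi_mul_genJacobi_mul_rpow (by linarith),
      ← intervalIntegral.integral_const_mul]
    refine intervalIntegral.integral_congr fun r _ => ?_
    simp only [deriv_genJacobi_comp, neg_add_cancel]
    ring
  rw [hint]
  by_cases hkj : k = j
  · subst hkj
    have hk : (0 : ℝ) < k + 1 + 2 * β := by positivity
    simp only [if_true, Nat.add_one_ne_zero, if_false]
    push_cast
    field_simp
    ring
  · simp [hkj]
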